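/- The run of the sphere automaton is sound on paths: let ρ be a run of the sphere automaton B_r on a nested word W, let i be a position, let E_i be the unique extended r-sphere in ρ(i) whose active node equals its center. Then for every path γ_i = j₀ ↔ j₁ ↔ … ↔ j_d in the Gaifman graph of E_i starting at the center, there exists a unique sequence of positions i₀ = i, i₁, …, i_d of W such that for each k, E_i with active node j_k belongs to ρ(i_k), and each edge (j_k, j_{k+1}) of the sphere is simulated by a corresponding edge (i_k, i_{k+1}) of W (same labels; ⋖-edges of the sphere map to ⋖-edges of W and μ-edges to μ-edges, in the same direction). -/

import Mathlib

/-- The *kind* of a letter in a `K`-stack call-return alphabet: a call of some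
stack `s`, a return of some stack `s`, or an internal action. -/
inductive CRKind (K : ℕ) where
  | call (s : Fin K)
  | ret (s : Fin K)
  | int

/-- A `K`-stack call-return alphabet over the letters `A`: every letter is
(exclusively) a call of one stack, a return of one stack, or internal.  This
encodes the pairwise disjointness of the collection
`⟨{(Σ_c^s, Σ_r^s)}_{s∈[K]}, Σ_int⟩` together with `Σ` being their union. -/
structure CRAlphabet (K : ℕ) (A : Type) where
  kind : A → CRKind K

namespace CRAlphabet

variable {K : ℕ} {A : Type}

def callSet (h : CRAlphabet K A) (s : Fin K) : Set A := {a | h.kind a = .call s}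
def retSet (h : CRAlphabet K A) (s : Fin K) : Set A := {a | h.kind a = .ret s}
def intSet (h : CRAlphabet K A) : Set A := {a | h.kind a = .int}

end CRAlphabet

/-- `s`-well-formed strings: generated by the grammar
`A ::= aAb | AA | ε | c` with `a ∈ c`, `b ∈ r`, `c ∉ c ∪ r`. -/
inductive SWellFormed {A : Type} (c r : Set A) : List A → Prop where
  | nil : SWellFormed c r []
  | single {x : A} : x ∉ c → x ∉ r → SWellFormed c r [x]
  | wrap {a b : A} {u : List A} : a ∈ c → b ∈ r → SWellFormed c r u →
      SWellFormed c r (a :: u ++ [b])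
  | concat {u v : List A} : SWellFormed c r u → SWellFormed c r v →
      SWellFormed c r (u ++ v)

/-- The matching relation `μ^s` of the nested word determined by the string
`w` (positions `0`-based): `(i,j) ∈ μ^s` iff `i < j`, `λ(i) ∈ Σ_c^s`,
`λ(j) ∈ Σ_r^s` and `λ(i+1) … λ(j-1)` is `s`-well formed. -/
def Matched {K : ℕ} {A : Type} (h : CRAlphabet K A) (w : List A) (s : Fin K)
    (i j : ℕ) : Prop :=
  i < j ∧ j < w.length ∧
  (∃ a, w[i]? = some a ∧ a ∈ h.callSet s) ∧
  (∃ b, w[j]? = some b ∧ b ∈ h.retSet s) ∧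
  SWellFormed (h.callSet s) (h.retSet s) ((w.take j).drop (i + 1))

/-- The full matching relation `μ = ⋃_s μ^s`. -/
def MuAny {K : ℕ} {A : Type} (h : CRAlphabet K A) (w : List A) (i j : ℕ) : Prop :=
  ∃ s, Matched h w s i j

/-- Gaifman adjacency of positions of the nested word of `w`:
`i ↔ j` iff `(i,j)` or `(j,i)` is in `⋖ ∪ μ`. -/
def Adj {K : ℕ} {A : Type} (h : CRAlphabet K A) (w : List A) (i j : ℕ) : Prop :=
  (j = i + 1 ∧ j < w.length) ∨ (i = j + 1 ∧ i < w.length) ∨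
    MuAny h w i j ∨ MuAny h w j i

/-- `DistLE h w d i j`: the Gaifman distance between `i` and `j` in the
nested word of `w` is at most `d`. -/
def DistLE {K : ℕ} {A : Type} (h : CRAlphabet K A) (w : List A) :
    ℕ → ℕ → ℕ → Prop
  | 0, i, j => i = j
  | d + 1, i, j => i = j ∨ ∃ k, Adj h w i k ∧ DistLE h w d k j

/-- The ball of radius `r` around position `i` (the universe of the
`r`-sphere `Sph_r(w,i)`). -/
def ball {K : ℕ} {A : Type} (h : CRAlphabet K A) (w : List A) (r i : ℕ) : Set ℕ :=
  {j | DistLE h w r i j}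

/-- `f` is an isomorphism from the `r`-sphere of `v` around `c` onto the
`r`-sphere of `w` around `i` (mapping center to center and preserving labels,
successor edges and matching edges). -/
def SphIsoF {K : ℕ} {A : Type} (h : CRAlphabet K A) (r : ℕ) (v : List A) (c : ℕ)
    (w : List A) (i : ℕ) (f : ℕ → ℕ) : Prop :=
  c < v.length ∧ i < w.length ∧ f c = i ∧
  Set.BijOn f (ball h v r c) (ball h w r i) ∧
  (∀ j ∈ ball h v r c, v[j]? = w[(f j)]?) ∧
  (∀ j ∈ ball h v r c, ∀ k ∈ ball h v r c,
    ((k = j + 1 ∧ k < v.length) ↔ (f k = f j + 1 ∧ f k < w.length)) ∧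
    (∀ s, Matched h v s j k ↔ Matched h w s (f j) (f k)))

/-- The `r`-sphere of `v` around `c` is isomorphic to the `r`-sphere of `w`
around `i`. -/
def SphIso {K : ℕ} {A : Type} (h : CRAlphabet K A) (r : ℕ) (v : List A) (c : ℕ)
    (w : List A) (i : ℕ) : Prop :=
  ∃ f, SphIsoF h r v c w i f

/-- A (representation of an) extended `r`-sphere, given by an ambient nested
word `word` together with the sphere center `ctr`, the active node `act` and
a color `col`; the sphere itself is the `r`-sphere of `word` around `ctr`. -/
structure ESph (A : Type) where
  word : List A
  ctr : ℕ
  act : ℕ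
  col : ℕ

/-- The representation is valid: the center is a position and the active node
lies in the sphere. -/
def ESph.ValidE {A : Type} (h : CRAlphabet 2 A) (r : ℕ) (E : ESph A) : Prop :=
  E.ctr < E.word.length ∧ DistLE h E.word r E.ctr E.act

/-- Successor edges of the sphere (both endpoints within the ball). -/
def SSucc {A : Type} (h : CRAlphabet 2 A) (r : ℕ) (E : ESph A) (j k : ℕ) : Prop :=
  DistLE h E.word r E.ctr j ∧ DistLE h E.word r E.ctr k ∧
    k = j + 1 ∧ k < E.word.length

/-- Matching edges of the sphere (both endpoints within the ball). -/
def SMu {A : Type} (h : CRAlphabet 2 A) (r : ℕ) (E : ESph A) (j k : ℕ) : Prop :=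
  DistLE h E.word r E.ctr j ∧ DistLE h E.word r E.ctr k ∧ MuAny h E.word j k

/-- Gaifman adjacency inside the sphere. -/
def SAdj {A : Type} (h : CRAlphabet 2 A) (r : ℕ) (E : ESph A) (j k : ℕ) : Prop :=
  SSucc h r E j k ∨ SSucc h r E k j ∨ SMu h r E j k ∨ SMu h r E k j

/-- The extended sphere `E[i]`: `E` with active node replaced by `i`. -/
def setAct {A : Type} (E : ESph A) (i : ℕ) : ESph A := { E with act := i }

/-- Isomorphism of the cores (the underlying pointed spheres). -/
def CoreIsoF {A : Type} (h : CRAlphabet 2 A) (r : ℕ) (E E' : ESph A)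
    (f : ℕ → ℕ) : Prop :=
  SphIsoF h r E.word E.ctr E'.word E'.ctr f

/-- Isomorphism of extended spheres: equal colors and a core isomorphism
mapping active node to active node. -/
def EIso {A : Type} (h : CRAlphabet 2 A) (r : ℕ) (E E' : ESph A) : Prop :=
  E.col = E'.col ∧ ∃ f, CoreIsoF h r E E' f ∧ f E.act = E'.act

/-- Membership of an extended sphere in a state, up to isomorphism. -/
def MemE {A : Type} (h : CRAlphabet 2 A) (r : ℕ) (𝓔 : Set (ESph A))
    (E : ESph A) : Prop :=
  ∃ E' ∈ 𝓔, EIso h r E E'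

/-- The label of the active node. -/
def LabelAt {A : Type} (E : ESph A) : Option A := E.word[E.act]?

/-- A valid state of the sphere automaton `B_r`: a set of (valid) extended
spheres such that (a) there is a unique (up to isomorphism) member whose
active node is the center, (b) all active nodes carry the same label, (c) two
members with isomorphic cores and equal colors have the same active node. -/
def ValidState {A : Type} (h : CRAlphabet 2 A) (r : ℕ) (𝓔 : Set (ESph A)) : Prop :=
  (∀ E ∈ 𝓔, E.ValidE h r) ∧
  (∃ E ∈ 𝓔, E.act = E.ctr) ∧
  (∀ E ∈ 𝓔, ∀ E' ∈ 𝓔, E.act = E.ctr → E'.act = E'.ctr → EIso h r E E') ∧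
  (∃ a : A, ∀ E ∈ 𝓔, LabelAt E = some a) ∧
  (∀ E ∈ 𝓔, ∀ E' ∈ 𝓔, E.col = E'.col → (∃ f, CoreIsoF h r E E' f) →
    EIso h r E E')

/-- The active node is at distance exactly `r` from the center. -/
def AtRadius {A : Type} (h : CRAlphabet 2 A) (r : ℕ) (E : ESph A) : Prop :=
  ∀ d, d < r → ¬ DistLE h E.word d E.ctr E.act

/-- The shared transition conditions (2)–(7) of the sphere automaton. -/
def Cond27 {A : Type} (h : CRAlphabet 2 A) (r : ℕ) (𝓔 𝓔' : Set (ESph A))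
    (a : A) : Prop :=
  (∀ E ∈ 𝓔', LabelAt E = some a) ∧
  (∀ E ∈ 𝓔, ∀ i, DistLE h E.word r E.ctr i → MemE h r 𝓔' (setAct E i) →
    SSucc h r E E.act i) ∧
  (∀ E ∈ 𝓔', (𝓔 ≠ ∅ ∧ ¬ ∃ i, SSucc h r E i E.act) → AtRadius h r E) ∧
  (∀ E ∈ 𝓔, (¬ ∃ i, SSucc h r E E.act i) → AtRadius h r E) ∧
  (∀ E ∈ 𝓔', ∀ i, SSucc h r E i E.act → MemE h r 𝓔 (setAct E i)) ∧
  (∀ E ∈ 𝓔, ∀ i, SSucc h r E E.act i → MemE h r 𝓔' (setAct E i))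

/-- The transition relation `δ₁` of `B_r`, including condition (1): active
nodes of the target state have no matching predecessor within their sphere. -/
def Trans1 {A : Type} (h : CRAlphabet 2 A) (r : ℕ) (𝓔 : Set (ESph A)) (a : A)
    (𝓔' : Set (ESph A)) : Prop :=
  (𝓔 = ∅ ∨ ValidState h r 𝓔) ∧ ValidState h r 𝓔' ∧ 𝓔'.Nonempty ∧
  (∀ E ∈ 𝓔', ¬ ∃ j, SMu h r E j E.act) ∧
  Cond27 h r 𝓔 𝓔' a

/-- The transition conditions (3')–(7') of the sphere automaton. -/
def Cond3'7' {A : Type} (h : CRAlphabet 2 A) (r : ℕ)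
    (𝓔c 𝓔' : Set (ESph A)) : Prop :=
  (∀ E ∈ 𝓔c, ∀ i, DistLE h E.word r E.ctr i → MemE h r 𝓔' (setAct E i) →
    SMu h r E E.act i) ∧
  (∀ E ∈ 𝓔', (¬ ∃ j, SMu h r E j E.act) → AtRadius h r E) ∧
  (∀ E ∈ 𝓔c, (¬ ∃ j, SMu h r E E.act j) → AtRadius h r E) ∧
  (∀ E ∈ 𝓔', ∀ j, SMu h r E j E.act → MemE h r 𝓔c (setAct E j)) ∧
  (∀ E ∈ 𝓔c, ∀ j, SMu h r E E.act j → MemE h r 𝓔' (setAct E j))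

/-- The transition relation `δ₂` of `B_r` (used at matched returns,
consulting the state `𝓔c` reached at the matching call). -/
def Trans2 {A : Type} (h : CRAlphabet 2 A) (r : ℕ) (𝓔c 𝓔 : Set (ESph A))
    (a : A) (𝓔' : Set (ESph A)) : Prop :=
  ValidState h r 𝓔c ∧ ValidState h r 𝓔 ∧ ValidState h r 𝓔' ∧
  𝓔c.Nonempty ∧ 𝓔.Nonempty ∧ 𝓔'.Nonempty ∧
  Cond27 h r 𝓔 𝓔' a ∧ Cond3'7' h r 𝓔c 𝓔'

/-- `ρ` is a run of the sphere automaton `B_r` on the nested word of `w`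
(initial state: `∅`). -/
def IsRunB {A : Type} (h : CRAlphabet 2 A) (r : ℕ) (w : List A)
    (ρ : ℕ → Set (ESph A)) : Prop :=
  (∃ a, w[0]? = some a ∧ Trans1 h r ∅ a (ρ 0)) ∧
  ∀ i, 0 < i → i < w.length → ∃ a, w[i]? = some a ∧
    ((∃ j, MuAny h w j i ∧ Trans2 h r (ρ j) (ρ (i - 1)) a (ρ i)) ∨
     ((¬ ∃ j, MuAny h w j i) ∧ Trans1 h r (ρ (i - 1)) a (ρ i)))

/-- Final states of `B_r`: no active node has a pending `⋖`- or
`μ`-successor. -/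
def FinalB {A : Type} (h : CRAlphabet 2 A) (r : ℕ) (𝓔 : Set (ESph A)) : Prop :=
  ∀ E ∈ 𝓔, (¬ ∃ k, SSucc h r E E.act k) ∧ (¬ ∃ k, SMu h r E E.act k)

/-- Calling states of `B_r`: some active node has a `μ`-successor. -/
def CallingB {A : Type} (h : CRAlphabet 2 A) (r : ℕ) (𝓔 : Set (ESph A)) : Prop :=
  ∃ E ∈ 𝓔, ∃ k, SMu h r E E.act k

/-- The run `ρ` of `B_r` on `w` is accepting. -/
def AcceptingB {A : Type} (h : CRAlphabet 2 A) (r : ℕ) (w : List A)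
    (ρ : ℕ → Set (ESph A)) : Prop :=
  FinalB h r (ρ (w.length - 1)) ∧
  ∀ i < w.length, CallingB h r (ρ i) → ∃ j, MuAny h w i j

/-!
A path through the sphere is lifted to `w` edge by edge. If `E[x] ∈ ρ(p)` and
`x`–`y` is an edge of the sphere, an isomorphism carries it to an edge at the
active node of some `F ∈ ρ(p)`; the transition conditions of `δ₁`/`δ₂` then put
`E[y]` into the state at `p + 1`, `p - 1` or the position matched with `p`, and
acceptance guarantees that the required successor or matching return exists.
The lift is unique because every position has at most one matching partner:
along a well-formed segment calls minus returns is zero and never negative on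
prefixes, which rules out two returns matching one call and vice versa.
-/

section CallBalance

variable {A : Type} (c r : Set A)

open Classical in
noncomputable def letterWeight (a : A) : ℤ :=
  if a ∈ c then 1 else if a ∈ r then -1 else 0

noncomputable def callBalance (u : List A) : ℤ :=
  (u.map (letterWeight c r)).sum

variable {c r}

@[simp]
lemma callBalance_nil : callBalance c r [] = 0 := rfl

@[simp]
lemma callBalance_append (u v : List A) :
    callBalance c r (u ++ v) = callBalance c r u + callBalance c r v := by
  simp [callBalance]

@[simp]
lemma callBalance_cons (a : A) (u : List A) :
    callBalance c r (a :: u) = letterWeight c r a + callBalance c r u := by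
  simp [callBalance]

lemma letterWeight_of_mem_call {a : A} (ha : a ∈ c) : letterWeight c r a = 1 := by
  simp [letterWeight, ha]

lemma letterWeight_of_mem_ret (hd : Disjoint c r) {a : A} (ha : a ∈ r) :
    letterWeight c r a = -1 := by
  simp [letterWeight, ha, hd.notMem_of_mem_right ha]

lemma letterWeight_ge_neg_one (a : A) : -1 ≤ letterWeight c r a := by
  unfold letterWeight; split_ifs <;> norm_num

lemma SWellFormed.callBalance_eq_zero (hd : Disjoint c r) {u : List A}
    (hu : SWellFormed c r u) : callBalance c r u = 0 := by
  induction hu with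
  | nil => rfl
  | single hc hr => simp [letterWeight, hc, hr]
  | wrap ha hb _ ih =>
    simp [ih, letterWeight_of_mem_call ha, letterWeight_of_mem_ret hd hb]
  | concat _ _ ihu ihv => simp [ihu, ihv]

lemma SWellFormed.callBalance_take_nonneg {u : List A} (hu : SWellFormed c r u) (n : ℕ) :
    0 ≤ callBalance c r (u.take n) := by
  induction hu generalizing n with
  | nil => simp
  | single hc hr => cases n <;> simp [letterWeight, hc, hr]
  | @wrap a b u ha _ _ ih =>
    cases n with
    | zero => simp
    | succ n =>
      have hb : -1 ≤ callBalance c r ([b].take (n - u.length)) := by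
        cases n - u.length <;> simp [letterWeight_ge_neg_one]
      simp only [List.cons_append, List.take_succ_cons, callBalance_cons,
        letterWeight_of_mem_call ha, List.take_append, callBalance_append]
      linarith [ih n]
  | @concat u _ _ _ ihu ihv =>
    rw [List.take_append, callBalance_append]
    linarith [ihu n, ihv (n - u.length)]

lemma SWellFormed.callBalance_drop_nonpos (hd : Disjoint c r) {u : List A}
    (hu : SWellFormed c r u) (n : ℕ) : callBalance c r (u.drop n) ≤ 0 := by
  have htot := hu.callBalance_eq_zero hd
  rw [← List.take_append_drop n u, callBalance_append] at htot
  linarith [hu.callBalance_take_nonneg n]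

end CallBalance

namespace CRAlphabet

variable {K : ℕ} {A : Type} (h : CRAlphabet K A)

lemma disjoint_callSet_retSet (s s' : Fin K) : Disjoint (h.callSet s) (h.retSet s') :=
  Set.disjoint_left.mpr fun _ ha hb => by cases ha.symm.trans hb

variable {h}

lemma eq_of_mem_callSet {a : A} {s s' : Fin K} (ha : a ∈ h.callSet s)
    (ha' : a ∈ h.callSet s') : s = s' :=
  CRKind.call.inj (ha.symm.trans ha')

lemma eq_of_mem_retSet {a : A} {s s' : Fin K} (ha : a ∈ h.retSet s)
    (ha' : a ∈ h.retSet s') : s = s' :=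
  CRKind.ret.inj (ha.symm.trans ha')

end CRAlphabet

section Matching

variable {K : ℕ} {A : Type} {h : CRAlphabet K A} {w : List A} {s : Fin K}

/-- A return at `j₁` inside the segment of a longer matching would leave the
balance of a prefix negative. -/
lemma Matched.eq_of_le_right {i j₁ j₂ : ℕ} (h₁ : Matched h w s i j₁)
    (h₂ : Matched h w s i j₂) (hle : j₁ ≤ j₂) : j₁ = j₂ := by
  by_contra hne
  obtain ⟨hij₁, hj₁, -, ⟨b, hb, hbr⟩, hwf₁⟩ := h₁
  have hprefix : ((w.take j₂).drop (i + 1)).take (j₁ - i) =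
      (w.take j₁).drop (i + 1) ++ [b] := by
    rw [List.take_drop, List.take_take, min_eq_left (by omega),
      show i + 1 + (j₁ - i) = j₁ + 1 by omega, List.take_add_one, hb, Option.toList_some,
      List.drop_append_of_le_length (by simp; omega)]
  have hneg := h₂.2.2.2.2.callBalance_take_nonneg (j₁ - i)
  rw [hprefix, callBalance_append,
    hwf₁.callBalance_eq_zero (h.disjoint_callSet_retSet s s)] at hneg
  simp [letterWeight_of_mem_ret (h.disjoint_callSet_retSet s s) hbr] at hneg

/-- A call at `i₂` inside the segment of a longer matching would leave the
balance of a suffix positive. -/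
lemma Matched.eq_of_le_left {i₁ i₂ j : ℕ} (h₁ : Matched h w s i₁ j)
    (h₂ : Matched h w s i₂ j) (hle : i₁ ≤ i₂) : i₁ = i₂ := by
  by_contra hne
  obtain ⟨hij₂, hj, ⟨a, ha, hac⟩, -, hwf₂⟩ := h₂
  have hi₂ : i₂ < (w.take j).length := by simp; omega
  have hsuffix : ((w.take j).drop (i₁ + 1)).drop (i₂ - (i₁ + 1)) =
      a :: (w.take j).drop (i₂ + 1) := by
    rw [List.drop_drop, show i₁ + 1 + (i₂ - (i₁ + 1)) = i₂ by omega,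
      List.drop_eq_getElem_cons hi₂, List.getElem_take]
    simp_all [List.getElem?_eq_getElem (show i₂ < w.length by omega)]
  have hpos := h₁.2.2.2.2.callBalance_drop_nonpos (h.disjoint_callSet_retSet s s)
    (i₂ - (i₁ + 1))
  rw [hsuffix, callBalance_cons, letterWeight_of_mem_call hac,
    hwf₂.callBalance_eq_zero (h.disjoint_callSet_retSet s s)] at hpos
  norm_num at hpos

lemma Matched.right_unique {i j₁ j₂ : ℕ} (h₁ : Matched h w s i j₁)
    (h₂ : Matched h w s i j₂) : j₁ = j₂ := by
  rcases le_total j₁ j₂ with hle | hle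
  · exact h₁.eq_of_le_right h₂ hle
  · exact (h₂.eq_of_le_right h₁ hle).symm

lemma Matched.left_unique {i₁ i₂ j : ℕ} (h₁ : Matched h w s i₁ j)
    (h₂ : Matched h w s i₂ j) : i₁ = i₂ := by
  rcases le_total i₁ i₂ with hle | hle
  · exact h₁.eq_of_le_left h₂ hle
  · exact (h₂.eq_of_le_left h₁ hle).symm

lemma MuAny.lt {i j : ℕ} (hM : MuAny h w i j) : i < j :=
  hM.elim fun _ hM => hM.1

lemma MuAny.lt_length {i j : ℕ} (hM : MuAny h w i j) : j < w.length :=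
  hM.elim fun _ hM => hM.2.1

lemma MuAny.right_unique {i j₁ j₂ : ℕ} (h₁ : MuAny h w i j₁) (h₂ : MuAny h w i j₂) :
    j₁ = j₂ := by
  obtain ⟨s, hM₁⟩ := h₁
  obtain ⟨s', hM₂⟩ := h₂
  obtain ⟨a, ha, hac⟩ := hM₁.2.2.1
  obtain ⟨a', ha', hac'⟩ := hM₂.2.2.1
  obtain rfl : a = a' := Option.some.inj (ha.symm.trans ha')
  obtain rfl := CRAlphabet.eq_of_mem_callSet hac hac'
  exact hM₁.right_unique hM₂

lemma MuAny.left_unique {i₁ i₂ j : ℕ} (h₁ : MuAny h w i₁ j) (h₂ : MuAny h w i₂ j) :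
    i₁ = i₂ := by
  obtain ⟨s, hM₁⟩ := h₁
  obtain ⟨s', hM₂⟩ := h₂
  obtain ⟨b, hb, hbr⟩ := hM₁.2.2.2.1
  obtain ⟨b', hb', hbr'⟩ := hM₂.2.2.2.1
  obtain rfl : b = b' := Option.some.inj (hb.symm.trans hb')
  obtain rfl := CRAlphabet.eq_of_mem_retSet hbr hbr'
  exact hM₁.left_unique hM₂

lemma Matched.succ_of_getElem?_eq {v : List A} {x p : ℕ} (hM : Matched h v s x (x + 1))
    (hx : v[x]? = w[p]?) (hy : v[x + 1]? = w[p + 1]?) (hp : p + 1 < w.length) :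
    Matched h w s p (p + 1) := by
  obtain ⟨-, -, ⟨a, ha, hac⟩, ⟨b, hb, hbr⟩, -⟩ := hM
  refine ⟨p.lt_succ_self, hp, ⟨a, hx ▸ ha, hac⟩, ⟨b, hy ▸ hb, hbr⟩, ?_⟩
  rw [List.drop_eq_nil_of_le (by simp)]
  exact .nil

end Matching

namespace SphIsoF

variable {K : ℕ} {A : Type} {h : CRAlphabet K A} {r : ℕ} {u v w : List A} {c i m : ℕ}
  {f g : ℕ → ℕ}

lemma refl (hc : c < v.length) : SphIsoF h r v c v c id :=
  ⟨hc, hc, rfl, Set.bijOn_id _, fun _ _ => rfl, fun _ _ _ _ => ⟨Iff.rfl, fun _ => Iff.rfl⟩⟩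

lemma comp (hf : SphIsoF h r v c w i f) (hg : SphIsoF h r w i u m g) :
    SphIsoF h r v c u m (g ∘ f) := by
  obtain ⟨hc, -, hfc, hbij, hlab, hedge⟩ := hf
  obtain ⟨-, hm, hgc, hbij', hlab', hedge'⟩ := hg
  refine ⟨hc, hm, by simp [hfc, hgc], hbij'.comp hbij, fun j hj => ?_, fun j hj k hk => ?_⟩
  · exact (hlab j hj).trans (hlab' (f j) (hbij.mapsTo hj))
  · have hfj := hbij.mapsTo hj
    have hfk := hbij.mapsTo hk
    exact ⟨(hedge j hj k hk).1.trans (hedge' _ hfj _ hfk).1,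
      fun s => ((hedge j hj k hk).2 s).trans ((hedge' _ hfj _ hfk).2 s)⟩

lemma muAny_iff (hf : SphIsoF h r v c w i f) {j k : ℕ} (hj : j ∈ ball h v r c)
    (hk : k ∈ ball h v r c) : MuAny h v j k ↔ MuAny h w (f j) (f k) :=
  exists_congr fun s => (hf.2.2.2.2.2 j hj k hk).2 s

end SphIsoF

section ExtendedSphere

variable {A : Type} {h : CRAlphabet 2 A} {r : ℕ} {E F G : ESph A} {f : ℕ → ℕ} {x y : ℕ}

lemma CoreIsoF.sSucc (hf : CoreIsoF h r E F f) (hs : SSucc h r E x y) :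
    SSucc h r F (f x) (f y) :=
  ⟨hf.2.2.2.1.mapsTo hs.1, hf.2.2.2.1.mapsTo hs.2.1,
    ((hf.2.2.2.2.2 x hs.1 y hs.2.1).1).mp hs.2.2⟩

lemma CoreIsoF.sMu (hf : CoreIsoF h r E F f) (hm : SMu h r E x y) :
    SMu h r F (f x) (f y) :=
  ⟨hf.2.2.2.1.mapsTo hm.1, hf.2.2.2.1.mapsTo hm.2.1,
    (SphIsoF.muAny_iff hf hm.1 hm.2.1).mp hm.2.2⟩

lemma SAdj.mem_ball (hadj : SAdj h r E x y) :
    DistLE h E.word r E.ctr x ∧ DistLE h E.word r E.ctr y := by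
  rcases hadj with hs | hs | hm | hm
  exacts [⟨hs.1, hs.2.1⟩, ⟨hs.2.1, hs.1⟩, ⟨hm.1, hm.2.1⟩, ⟨hm.2.1, hm.1⟩]

lemma EIso.refl (hc : E.ctr < E.word.length) : EIso h r E E :=
  ⟨rfl, id, SphIsoF.refl hc, rfl⟩

lemma EIso.trans (hEF : EIso h r E F) (hFG : EIso h r F G) : EIso h r E G := by
  obtain ⟨hcEF, f, hf, hfa⟩ := hEF
  obtain ⟨hcFG, g, hg, hga⟩ := hFG
  exact ⟨hcEF.trans hcFG, g ∘ f, SphIsoF.comp hf hg, by simp [hfa, hga]⟩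

lemma MemE.of_eIso {𝓔 : Set (ESph A)} (hEF : EIso h r E F) (hF : MemE h r 𝓔 F) :
    MemE h r 𝓔 E :=
  hF.elim fun G ⟨hG, hFG⟩ => ⟨G, hG, hEF.trans hFG⟩

end ExtendedSphere

namespace IsRunB

variable {A : Type} {h : CRAlphabet 2 A} {r : ℕ} {w : List A} {ρ : ℕ → Set (ESph A)}
  {p : ℕ} {F : ESph A} {y : ℕ}

lemma cond27_succ (hrun : IsRunB h r w ρ) (hp : p + 1 < w.length) :
    ∃ a, w[p + 1]? = some a ∧ Cond27 h r (ρ p) (ρ (p + 1)) a := by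
  obtain ⟨a, ha, ⟨_, -, hδ₂⟩ | ⟨-, hδ₁⟩⟩ := hrun.2 (p + 1) p.succ_pos hp
  · exact ⟨a, ha, hδ₂.2.2.2.2.2.2.1⟩
  · exact ⟨a, ha, hδ₁.2.2.2.2⟩

lemma labelAt (hrun : IsRunB h r w ρ) (hp : p < w.length) (hF : F ∈ ρ p) :
    LabelAt F = w[p]? := by
  cases p with
  | zero =>
    obtain ⟨a, ha, hδ₁⟩ := hrun.1
    exact (hδ₁.2.2.2.2.1 F hF).trans ha.symm
  | succ p =>
    obtain ⟨a, ha, hcond⟩ := hrun.cond27_succ hp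
    exact (hcond.1 F hF).trans ha.symm

lemma getElem?_eq_of_memE (hrun : IsRunB h r w ρ) {E : ESph A} (hp : p < w.length)
    (hmem : MemE h r (ρ p) (setAct E y)) (hy : DistLE h E.word r E.ctr y) :
    E.word[y]? = w[p]? := by
  obtain ⟨F, hF, -, f, hf, hfy⟩ := hmem
  rw [show E.word[y]? = F.word[f y]? from hf.2.2.2.2.1 y hy]
  exact (congrArg _ hfy).trans (hrun.labelAt hp hF)

/-- At each position the run applies either `δ₂` (at a matched return) or
`δ₁`, whose condition (1) forbids `μ`-predecessors of active nodes. -/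
lemma cond3'7'_or_not_sMu (hrun : IsRunB h r w ρ) (hp : p < w.length) :
    (∃ c, MuAny h w c p ∧ Cond3'7' h r (ρ c) (ρ p)) ∨
      ((¬ ∃ c, MuAny h w c p) ∧ ∀ F ∈ ρ p, ¬ ∃ j, SMu h r F j F.act) := by
  cases p with
  | zero =>
    obtain ⟨_, -, hδ₁⟩ := hrun.1
    exact .inr ⟨fun ⟨_, hM⟩ => Nat.not_lt_zero _ hM.lt, hδ₁.2.2.2.1⟩
  | succ p =>
    obtain ⟨_, -, ⟨c, hM, hδ₂⟩ | ⟨hno, hδ₁⟩⟩ := hrun.2 (p + 1) p.succ_pos hp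
    · exact .inl ⟨c, hM, hδ₂.2.2.2.2.2.2.2⟩
    · exact .inr ⟨hno, hδ₁.2.2.2.1⟩

lemma memE_succ (hrun : IsRunB h r w ρ) (hacc : AcceptingB h r w ρ) (hp : p < w.length)
    (hF : F ∈ ρ p) (hs : SSucc h r F F.act y) :
    p + 1 < w.length ∧ MemE h r (ρ (p + 1)) (setAct F y) := by
  have hp' : p + 1 < w.length := by
    by_contra hlast
    obtain rfl : p = w.length - 1 := by omega
    exact (hacc.1 F hF).1 ⟨y, hs⟩
  obtain ⟨a, -, hcond⟩ := hrun.cond27_succ hp'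
  exact ⟨hp', hcond.2.2.2.2.2 F hF y hs⟩

lemma memE_pred (hrun : IsRunB h r w ρ) (hp : p < w.length) (hF : F ∈ ρ p)
    (hs : SSucc h r F y F.act) : ∃ q, p = q + 1 ∧ MemE h r (ρ q) (setAct F y) := by
  cases p with
  | zero =>
    obtain ⟨a, -, hδ₁⟩ := hrun.1
    obtain ⟨G, hG, -⟩ := hδ₁.2.2.2.2.2.2.2.2.1 F hF y hs
    exact absurd hG id
  | succ q =>
    obtain ⟨a, -, hcond⟩ := hrun.cond27_succ hp
    exact ⟨q, rfl, hcond.2.2.2.2.1 F hF y hs⟩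

lemma memE_return (hrun : IsRunB h r w ρ) (hacc : AcceptingB h r w ρ) (hp : p < w.length)
    (hF : F ∈ ρ p) (hm : SMu h r F F.act y) :
    ∃ q, MuAny h w p q ∧ MemE h r (ρ q) (setAct F y) := by
  obtain ⟨q, hM⟩ := hacc.2 p hp ⟨F, hF, y, hm⟩
  rcases hrun.cond3'7'_or_not_sMu hM.lt_length with ⟨c, hM', hcond⟩ | ⟨hno, -⟩
  · obtain rfl := hM'.left_unique hM
    exact ⟨q, hM, hcond.2.2.2.2 F hF y hm⟩
  · exact absurd ⟨p, hM⟩ hno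

lemma memE_call (hrun : IsRunB h r w ρ) (hp : p < w.length) (hF : F ∈ ρ p)
    (hm : SMu h r F y F.act) : ∃ q, MuAny h w q p ∧ MemE h r (ρ q) (setAct F y) := by
  rcases hrun.cond3'7'_or_not_sMu hp with ⟨q, hM, hcond⟩ | ⟨-, hno⟩
  · exact ⟨q, hM, hcond.2.2.2.1 F hF y hm⟩
  · exact absurd ⟨y, hm⟩ (hno F hF)

end IsRunB

section Simulation

variable {A : Type} {h : CRAlphabet 2 A} {r : ℕ} {w : List A} {E : ESph A} {x y p q : ℕ}

def SimulatesEdge (h : CRAlphabet 2 A) (r : ℕ) (w : List A) (E : ESph A)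
    (x y p q : ℕ) : Prop :=
  (SSucc h r E x y → q = p + 1 ∧ q < w.length) ∧
  (SSucc h r E y x → p = q + 1 ∧ p < w.length) ∧
  (SMu h r E x y → MuAny h w p q) ∧
  (SMu h r E y x → MuAny h w q p)

lemma SimulatesEdge.symm (hsim : SimulatesEdge h r w E x y p q) :
    SimulatesEdge h r w E y x q p :=
  ⟨hsim.2.1, hsim.1, hsim.2.2.2, hsim.2.2.1⟩

lemma SimulatesEdge.unique {q' : ℕ} (hadj : SAdj h r E x y)
    (hq : SimulatesEdge h r w E x y p q) (hq' : SimulatesEdge h r w E x y p q') :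
    q = q' := by
  rcases hadj with hs | hs | hm | hm
  · rw [(hq.1 hs).1, (hq'.1 hs).1]
  · have := (hq.2.1 hs).1
    have := (hq'.2.1 hs).1
    omega
  · exact (hq.2.2.1 hm).right_unique (hq'.2.2.1 hm)
  · exact (hq.2.2.2 hm).left_unique (hq'.2.2.2 hm)

lemma simulatesEdge_of_sSucc (hs : SSucc h r E x y) (hp : p + 1 < w.length)
    (hx : E.word[x]? = w[p]?) (hy : E.word[y]? = w[p + 1]?) :
    SimulatesEdge h r w E x y p (p + 1) := by
  obtain ⟨-, -, rfl, -⟩ := hs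
  refine ⟨fun _ => ⟨rfl, hp⟩, fun hs' => by have := hs'.2.2.1; omega,
    fun ⟨_, _, s, hM⟩ => ⟨s, ?_⟩, fun ⟨_, _, hM⟩ => by have := hM.lt; omega⟩
  exact hM.succ_of_getElem?_eq hx hy hp

lemma simulatesEdge_of_sMu (hm : SMu h r E x y) (hs : ¬ SSucc h r E x y)
    (hM : MuAny h w p q) : SimulatesEdge h r w E x y p q := by
  have hxy := hm.2.2.lt
  refine ⟨fun hs' => absurd hs' hs, fun hs' => by have := hs'.2.2.1; omega, fun _ => hM,
    fun ⟨_, _, hM'⟩ => by have := hM'.lt; omega⟩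

lemma IsRunB.exists_simulatesEdge {ρ : ℕ → Set (ESph A)} (hrun : IsRunB h r w ρ)
    (hacc : AcceptingB h r w ρ) (hp : p < w.length) (hmem : MemE h r (ρ p) (setAct E x))
    (hadj : SAdj h r E x y) :
    ∃ q, q < w.length ∧ MemE h r (ρ q) (setAct E y) ∧ SimulatesEdge h r w E x y p q := by
  obtain ⟨hx, hy⟩ := hadj.mem_ball
  have hlabel_x := hrun.getElem?_eq_of_memE hp hmem hx
  obtain ⟨F, hF, hcol, f, hf, hfx⟩ := hmem
  replace hfx : f x = F.act := hfx
  have hback : ∀ {q}, MemE h r (ρ q) (setAct F (f y)) → MemE h r (ρ q) (setAct E y) :=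
    MemE.of_eIso ⟨hcol, f, hf, rfl⟩
  by_cases hs : SSucc h r E x y
  · obtain ⟨hp', hmem'⟩ := hrun.memE_succ hacc hp hF (hfx ▸ CoreIsoF.sSucc hf hs)
    refine ⟨p + 1, hp', hback hmem', simulatesEdge_of_sSucc hs hp' hlabel_x ?_⟩
    exact hrun.getElem?_eq_of_memE hp' (hback hmem') hy
  by_cases hs' : SSucc h r E y x
  · obtain ⟨q, rfl, hmem'⟩ := hrun.memE_pred hp hF (hfx ▸ CoreIsoF.sSucc hf hs')
    have hlabel_y := hrun.getElem?_eq_of_memE (by omega) (hback hmem') hy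
    exact ⟨q, by omega, hback hmem', (simulatesEdge_of_sSucc hs' hp hlabel_y hlabel_x).symm⟩
  by_cases hm : SMu h r E x y
  · obtain ⟨q, hM, hmem'⟩ := hrun.memE_return hacc hp hF (hfx ▸ CoreIsoF.sMu hf hm)
    exact ⟨q, hM.lt_length, hback hmem', simulatesEdge_of_sMu hm hs hM⟩
  have hm' : SMu h r E y x := ((hadj.resolve_left hs).resolve_left hs').resolve_left hm
  obtain ⟨q, hM, hmem'⟩ := hrun.memE_call hp hF (hfx ▸ CoreIsoF.sMu hf hm')
  exact ⟨q, by have := hM.lt; omega, hback hmem', (simulatesEdge_of_sMu hm' hs' hM).symm⟩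

end Simulation

section Chain

variable {α : Type*} {G : ℕ → α → Prop} {R : ℕ → α → α → Prop} {d : ℕ}

lemma exists_chain_of_forall_exists {a : α} (h₀ : G 0 a)
    (hstep : ∀ k < d, ∀ p, G k p → ∃ q, G (k + 1) q ∧ R k p q) :
    ∃ f : ℕ → α, f 0 = a ∧ (∀ k ≤ d, G k (f k)) ∧ ∀ k < d, R k (f k) (f (k + 1)) := by
  classical
  have hnext : ∀ k p, ∃ q, k < d → G k p → G (k + 1) q ∧ R k p q := fun k p => by
    by_cases hkp : k < d ∧ G k p
    · obtain ⟨q, hq⟩ := hstep k hkp.1 p hkp.2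
      exact ⟨q, fun _ _ => hq⟩
    · exact ⟨p, fun hk hp => absurd ⟨hk, hp⟩ hkp⟩
  choose next hnext using hnext
  let f : ℕ → α := fun k => Nat.rec a next k
  have hG : ∀ k ≤ d, G k (f k) := by
    intro k hk
    induction k with
    | zero => exact h₀
    | succ k ih => exact (hnext k (f k) (by omega) (ih (by omega))).1
  exact ⟨f, rfl, hG, fun k hk => (hnext k (f k) hk (hG k hk.le)).2⟩

lemma chain_unique (hR : ∀ k < d, ∀ p q q', R k p q → R k p q' → q = q') {f g : ℕ → α}
    (h₀ : f 0 = g 0) (hf : ∀ k < d, R k (f k) (f (k + 1)))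
    (hg : ∀ k < d, R k (g k) (g (k + 1))) : ∀ k ≤ d, f k = g k := by
  intro k hk
  induction k with
  | zero => exact h₀
  | succ k ih =>
    have hfg := ih (by omega)
    exact hR k (by omega) _ _ _ (hf k (by omega)) (hfg ▸ hg k (by omega))

end Chain

theorem stmt12_general {A : Type} (h : CRAlphabet 2 A) (r : ℕ) (w : List A)
    (ρ : ℕ → Set (ESph A))
    (hrun : IsRunB h r w ρ) (hacc : AcceptingB h r w ρ)
    (i : ℕ) (hi : i < w.length) (E : ESph A) (hE : E ∈ ρ i)
    (hEc : E.act = E.ctr)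
    (d : ℕ) (j : ℕ → ℕ) (hj0 : j 0 = E.ctr)
    (hpath : ∀ k < d, SAdj h r E (j k) (j (k + 1))) :
    ∃ ii : ℕ → ℕ,
      (ii 0 = i ∧
       (∀ k ≤ d, MemE h r (ρ (ii k)) (setAct E (j k))) ∧
       (∀ k ≤ d, E.word[(j k)]? = w[(ii k)]?) ∧
       (∀ k < d,
         (SSucc h r E (j k) (j (k + 1)) →
            ii (k + 1) = ii k + 1 ∧ ii (k + 1) < w.length) ∧
         (SSucc h r E (j (k + 1)) (j k) →
            ii k = ii (k + 1) + 1 ∧ ii k < w.length) ∧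
         (SMu h r E (j k) (j (k + 1)) → MuAny h w (ii k) (ii (k + 1))) ∧
         (SMu h r E (j (k + 1)) (j k) → MuAny h w (ii (k + 1)) (ii k)))) ∧
      (∀ ii' : ℕ → ℕ,
        (ii' 0 = i ∧
         (∀ k ≤ d, MemE h r (ρ (ii' k)) (setAct E (j k))) ∧
         (∀ k ≤ d, E.word[(j k)]? = w[(ii' k)]?) ∧
         (∀ k < d,
           (SSucc h r E (j k) (j (k + 1)) →
              ii' (k + 1) = ii' k + 1 ∧ ii' (k + 1) < w.length) ∧
           (SSucc h r E (j (k + 1)) (j k) →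
              ii' k = ii' (k + 1) + 1 ∧ ii' k < w.length) ∧
           (SMu h r E (j k) (j (k + 1)) → MuAny h w (ii' k) (ii' (k + 1))) ∧
           (SMu h r E (j (k + 1)) (j k) → MuAny h w (ii' (k + 1)) (ii' k)))) →
        ∀ k ≤ d, ii' k = ii k) := by
  have hctr : E.ctr < E.word.length := by
    have hlabel := hrun.labelAt hi hE
    rw [LabelAt, hEc, List.getElem?_eq_getElem hi] at hlabel
    exact (List.getElem?_eq_some_iff.mp hlabel).1
  have hmem₀ : MemE h r (ρ i) (setAct E (j 0)) := by
    rw [hj0, ← hEc]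
    exact ⟨E, hE, EIso.refl hctr⟩
  have hball : ∀ k ≤ d, DistLE h E.word r E.ctr (j k) := fun k hk => by
    cases k with
    | zero => cases r <;> simp [DistLE, hj0]
    | succ k => exact (hpath k (by omega)).mem_ball.2
  obtain ⟨ii, hii₀, hgood, hsim⟩ := exists_chain_of_forall_exists
    (G := fun k p => p < w.length ∧ MemE h r (ρ p) (setAct E (j k)))
    (R := fun k p q => SimulatesEdge h r w E (j k) (j (k + 1)) p q) ⟨hi, hmem₀⟩
    fun k hk p ⟨hp, hmem⟩ => by
      obtain ⟨q, hq, hmem', hsim⟩ := hrun.exists_simulatesEdge hacc hp hmem (hpath k hk)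
      exact ⟨q, ⟨hq, hmem'⟩, hsim⟩
  refine ⟨ii, ⟨hii₀, fun k hk => (hgood k hk).2,
    fun k hk => hrun.getElem?_eq_of_memE (hgood k hk).1 (hgood k hk).2 (hball k hk), hsim⟩, ?_⟩
  rintro ii' ⟨hii'₀, -, -, hsim'⟩
  exact chain_unique (R := fun k p q => SimulatesEdge h r w E (j k) (j (k + 1)) p q)
    (fun k hk _ _ _ => SimulatesEdge.unique (hpath k hk)) (hii'₀.trans hii₀.symm) hsim' hsim

/-- soundness of accepting runs of the sphere automaton on
paths.  Let `ρ` be an accepting run of `B_r` on `w`, `i` a position, and `E`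
the (unique) extended sphere of `ρ(i)` whose active node is its center.  Then
every path `j 0 = γ, j 1, …, j d` through the Gaifman graph of `E` starting at
the center is simulated by a unique sequence of positions `ii 0 = i, …, ii d`
of `w`: `E[j k] ∈ ρ(ii k)` (so labels agree), and each sphere edge
`(j k, j (k+1))` is simulated by a corresponding edge `(ii k, ii (k+1))` of
`w` (`⋖`-edges map to `⋖`-edges and `μ`-edges to `μ`-edges, in the same
direction). -/
theorem stmt12 {A : Type} (h : CRAlphabet 2 A) (r : ℕ) (w : List A)
    (hw : w ≠ []) (ρ : ℕ → Set (ESph A))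
    (hrun : IsRunB h r w ρ) (hacc : AcceptingB h r w ρ)
    (i : ℕ) (hi : i < w.length) (E : ESph A) (hE : E ∈ ρ i)
    (hEc : E.act = E.ctr)
    (d : ℕ) (j : ℕ → ℕ) (hj0 : j 0 = E.ctr)
    (hpath : ∀ k < d, SAdj h r E (j k) (j (k + 1))) :
    ∃ ii : ℕ → ℕ,
      (ii 0 = i ∧
       (∀ k ≤ d, MemE h r (ρ (ii k)) (setAct E (j k))) ∧
       (∀ k ≤ d, E.word[(j k)]? = w[(ii k)]?) ∧
       (∀ k < d,
         (SSucc h r E (j k) (j (k + 1)) →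
            ii (k + 1) = ii k + 1 ∧ ii (k + 1) < w.length) ∧
         (SSucc h r E (j (k + 1)) (j k) →
            ii k = ii (k + 1) + 1 ∧ ii k < w.length) ∧
         (SMu h r E (j k) (j (k + 1)) → MuAny h w (ii k) (ii (k + 1))) ∧
         (SMu h r E (j (k + 1)) (j k) → MuAny h w (ii (k + 1)) (ii k)))) ∧
      (∀ ii' : ℕ → ℕ,
        (ii' 0 = i ∧
         (∀ k ≤ d, MemE h r (ρ (ii' k)) (setAct E (j k))) ∧
         (∀ k ≤ d, E.word[(j k)]? = w[(ii' k)]?) ∧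
         (∀ k < d,
           (SSucc h r E (j k) (j (k + 1)) →
              ii' (k + 1) = ii' k + 1 ∧ ii' (k + 1) < w.length) ∧
           (SSucc h r E (j (k + 1)) (j k) →
              ii' k = ii' (k + 1) + 1 ∧ ii' k < w.length) ∧
           (SMu h r E (j k) (j (k + 1)) → MuAny h w (ii' k) (ii' (k + 1))) ∧
           (SMu h r E (j (k + 1)) (j k) → MuAny h w (ii' (k + 1)) (ii' k)))) →
        ∀ k ≤ d, ii' k = ii k) :=
  stmt12_general h r w ρ hrun hacc i hi E hE hEc d j hj0 hpath
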